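/- For the Cline-type density f(x) = a e^{−χ(x)}, setting x_k = e^{2kπ−1} and y_k = e^{(2k+1)π−1} one has x_k < y_k and f(y_k)/f(x_k) → ∞ as k → ∞ (equivalently χ(x_k) − χ(y_k) → ∞); consequently f is not almost decreasing: for every x₀ ≥ 0, sup_{x₀ ≤ x ≤ y < ∞} f(y)/f(x) = ∞. -/

import Mathlib

open MeasureTheory Filter Set

noncomputable section

/-- `χ(x) = x^{1/2 + δ·cos(ln(x+1))}` (real power). -/
def chiFn (δ : ℝ) (x : ℝ) : ℝ := x ^ ((1:ℝ)/2 + δ * Real.cos (Real.log (x + 1)))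

/-- The normalizing constant `a = (∫₀^∞ e^{-χ(y)} dy)⁻¹`. -/
def clineA (δ : ℝ) : ℝ := (∫ y in Set.Ioi (0:ℝ), Real.exp (-chiFn δ y))⁻¹

/-- The Cline-type density `f(x) = a e^{-χ(x)}` for `x ≥ 0`, `0` for `x < 0`. -/
def clineF (δ : ℝ) (x : ℝ) : ℝ :=
  if x < 0 then 0 else clineA δ * Real.exp (-chiFn δ x)

/-- The long-tailed density class `𝓛₀`. -/
def LongTailedDensity (f : ℝ → ℝ) : Prop :=
  (∀ᶠ x in atTop, 0 < f x) ∧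
  ∀ t : ℝ, Tendsto (fun x => f (x + t) / f x) atTop (nhds 1)

/-! Write `x = eˢ`. Since `log (x + 1) = s + o(1)`, the exponent of `χ` at `eˢ` is
`1/2 + δ cos s + o(1)`. Along `s = 2kπ - 1` this is about `1/2 + δ cos 1`, while half a period
later, at `s + π`, it is about `1/2 - δ cos 1`. Hence `log χ(eˢ) - log χ(e^(s + π))` grows like
`2δ cos 1 · s`, so `χ(x_k) - χ(y_k) = log (f(y_k) / f(x_k))` tends to infinity although
`x_k < y_k`. -/

open Real Topology

lemma chiFn_exp (δ t : ℝ) :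
    chiFn δ (exp t) = exp (t * (1 / 2 + δ * cos (log (exp t + 1)))) := by
  rw [chiFn, rpow_def_of_pos (exp_pos t), log_exp]

lemma rpow_sub_one_le_chiFn {δ x : ℝ} (hδ0 : 0 ≤ δ) (hδ : δ ≤ 1 / 2) (hx : 0 ≤ x) :
    x ^ (1 / 2 - δ) - 1 ≤ chiFn δ x := by
  unfold chiFn
  rcases le_total 1 x with hx1 | hx1
  · have hexp : 1 / 2 - δ ≤ 1 / 2 + δ * cos (log (x + 1)) := by
      nlinarith [neg_one_le_cos (log (x + 1))]
    linarith [rpow_le_rpow_of_exponent_le hx1 hexp]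
  · linarith [rpow_le_one hx hx1 (sub_nonneg.2 hδ),
      rpow_nonneg hx (1 / 2 + δ * cos (log (x + 1)))]

lemma integrableOn_exp_neg_chiFn {δ : ℝ} (hδ0 : 0 ≤ δ) (hδ : δ < 1 / 2) :
    IntegrableOn (fun x ↦ exp (-chiFn δ x)) (Ioi 0) := by
  have hdom : IntegrableOn (fun x : ℝ ↦ exp 1 * (x ^ (0 : ℝ) * exp (-x ^ (1 / 2 - δ)))) (Ioi 0) :=
    (integrableOn_rpow_mul_exp_neg_rpow (by norm_num) (by linarith)).const_mul _
  refine hdom.mono' (measurable_id.pow (by fun_prop)).neg.exp.aestronglyMeasurable ?_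
  filter_upwards [self_mem_ae_restrict measurableSet_Ioi] with x hx
  rw [norm_of_nonneg (exp_pos _).le, rpow_zero, one_mul, ← exp_add]
  exact exp_le_exp.2 (by linarith [rpow_sub_one_le_chiFn hδ0 hδ.le (le_of_lt hx)])

lemma clineA_pos {δ : ℝ} (hδ0 : 0 ≤ δ) (hδ : δ < 1 / 2) : 0 < clineA δ := by
  have : NeZero (volume (Ioi (0 : ℝ))) := ⟨by simp⟩
  exact inv_pos.2 (integral_exp_pos (integrableOn_exp_neg_chiFn hδ0 hδ))

lemma clineF_div_clineF {δ x y : ℝ} (ha : clineA δ ≠ 0) (hx : 0 ≤ x) (hy : 0 ≤ y) :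
    clineF δ y / clineF δ x = exp (chiFn δ x - chiFn δ y) := by
  rw [clineF, clineF, if_neg hx.not_gt, if_neg hy.not_gt, mul_div_mul_left _ _ ha, ← exp_sub,
    neg_sub_neg]

lemma tendsto_exp_sub_exp_atTop {α : Type*} {l : Filter α} {u v : α → ℝ}
    (hu : Tendsto u l atTop) (huv : Tendsto (fun i ↦ u i - v i) l atTop) :
    Tendsto (fun i ↦ exp (u i) - exp (v i)) l atTop := by
  have hgap : Tendsto (fun i ↦ 1 - exp (-(u i - v i))) l (𝓝 1) := by
    simpa using (tendsto_exp_atBot.comp (tendsto_neg_atTop_atBot.comp huv)).const_sub 1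
  refine ((tendsto_exp_atTop.comp hu).atTop_mul_pos one_pos hgap).congr fun i ↦ ?_
  rw [Function.comp_apply, mul_sub, mul_one, ← exp_add, neg_sub, add_sub_cancel]

lemma tendsto_log_exp_add_one_sub : Tendsto (fun t ↦ log (exp t + 1) - t) atTop (𝓝 0) := by
  have h : Tendsto (fun t ↦ log (1 + exp (-t))) atTop (𝓝 (log (1 + 0))) :=
    ((continuousAt_log (by norm_num)).tendsto).comp (tendsto_exp_neg_atTop_nhds_zero.const_add 1)
  rw [add_zero, log_one] at h
  refine h.congr fun t ↦ ?_
  have hfactor : exp t + 1 = exp t * (1 + exp (-t)) := by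
    rw [mul_add, mul_one, ← exp_add, add_neg_cancel, exp_zero]
  rw [hfactor, log_mul (exp_pos t).ne' (by positivity : (0 : ℝ) < 1 + exp (-t)).ne', log_exp,
    add_sub_cancel_left]

lemma tendsto_cos_log_exp_add_one {α : Type*} {l : Filter α} {t : α → ℝ} {c : ℝ}
    (ht : Tendsto t l atTop) (hc : Tendsto (fun i ↦ cos (t i)) l (𝓝 c)) :
    Tendsto (fun i ↦ cos (log (exp (t i) + 1))) l (𝓝 c) := by
  have hclose : Tendsto (fun i ↦ cos (log (exp (t i) + 1)) - cos (t i)) l (𝓝 0) :=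
    squeeze_zero_norm (fun i ↦ abs_cos_sub_cos_le _ _)
      (by simpa using (tendsto_log_exp_add_one_sub.comp ht).abs)
  simpa using hclose.add hc

lemma tendsto_chiFn_exp_sub_chiFn_exp_add_pi {α : Type*} {l : Filter α} {δ c : ℝ} {t : α → ℝ}
    (hδ : 0 < δ) (hc : 0 < c) (ht : Tendsto t l atTop)
    (hcos : Tendsto (fun i ↦ cos (t i)) l (𝓝 c)) :
    Tendsto (fun i ↦ chiFn δ (exp (t i)) - chiFn δ (exp (t i + π))) l atTop := by
  have hp : Tendsto (fun i ↦ cos (log (exp (t i) + 1))) l (𝓝 c) :=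
    tendsto_cos_log_exp_add_one ht hcos
  have hq : Tendsto (fun i ↦ cos (log (exp (t i + π) + 1))) l (𝓝 (-c)) :=
    tendsto_cos_log_exp_add_one (tendsto_atTop_add_const_right _ π ht)
      (by simpa only [cos_add_pi] using hcos.neg)
  have hu : Tendsto (fun i ↦ t i * (1 / 2 + δ * cos (log (exp (t i) + 1)))) l atTop :=
    ht.atTop_mul_pos (by positivity) ((hp.const_mul δ).const_add _)
  have hgap : Tendsto (fun i ↦ t i * (1 / 2 + δ * cos (log (exp (t i) + 1)))
      - (t i + π) * (1 / 2 + δ * cos (log (exp (t i + π) + 1)))) l atTop := by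
    have hdiff := ht.atTop_mul_pos (mul_pos hδ (by linarith : 0 < c - -c)) ((hp.sub hq).const_mul δ)
    refine (hdiff.atTop_add (((hq.const_mul δ).const_add (1 / 2)).const_mul π).neg).congr
      fun i ↦ ?_
    ring
  simpa only [chiFn_exp] using tendsto_exp_sub_exp_atTop hu hgap

theorem cline_density_not_almost_decreasing (δ : ℝ) (hδ0 : 0 < δ) (hδ : δ < 1/2) :
    (∀ k : ℕ, Real.exp (2 * k * Real.pi - 1) < Real.exp ((2 * k + 1) * Real.pi - 1)) ∧
    Tendsto (fun k : ℕ =>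
        clineF δ (Real.exp ((2 * k + 1) * Real.pi - 1)) /
          clineF δ (Real.exp (2 * k * Real.pi - 1))) atTop atTop ∧
    Tendsto (fun k : ℕ =>
        chiFn δ (Real.exp (2 * k * Real.pi - 1)) -
          chiFn δ (Real.exp ((2 * k + 1) * Real.pi - 1))) atTop atTop ∧
    -- consequently f is not almost decreasing
    (∀ x₀ : ℝ, 0 ≤ x₀ → ∀ C : ℝ,
      ∃ x y : ℝ, x₀ ≤ x ∧ x ≤ y ∧ C < clineF δ y / clineF δ x) := by
  have hshift (k : ℕ) : (2 * k + 1) * π - 1 = 2 * k * π - 1 + π := by ring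
  have hlt (k : ℕ) : exp (2 * k * π - 1) < exp ((2 * k + 1) * π - 1) :=
    exp_lt_exp.2 (by linarith [hshift k, pi_pos])
  have ht : Tendsto (fun k : ℕ ↦ 2 * k * π - 1) atTop atTop := by
    simpa only [sub_eq_add_neg] using tendsto_atTop_add_const_right _ (-1)
      ((tendsto_natCast_atTop_atTop.const_mul_atTop two_pos).atTop_mul_const pi_pos)
  have hcos (k : ℕ) : cos (2 * k * π - 1) = cos 1 := by
    rw [← cos_nat_mul_two_pi_sub 1 k]
    ring_nf
  have hchi : Tendsto (fun k : ℕ ↦ chiFn δ (exp (2 * k * π - 1)) -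
      chiFn δ (exp ((2 * k + 1) * π - 1))) atTop atTop := by
    simpa only [hshift] using tendsto_chiFn_exp_sub_chiFn_exp_add_pi hδ0 cos_one_pos ht
      (by simpa only [hcos] using tendsto_const_nhds)
  have hratio : Tendsto (fun k : ℕ ↦ clineF δ (exp ((2 * k + 1) * π - 1)) /
      clineF δ (exp (2 * k * π - 1))) atTop atTop :=
    (tendsto_exp_atTop.comp hchi).congr fun k ↦
      (clineF_div_clineF (clineA_pos hδ0.le hδ).ne' (exp_pos _).le (exp_pos _).le).symm
  refine ⟨hlt, hratio, hchi, fun x₀ _ C ↦ ?_⟩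
  obtain ⟨k, hCk, hx₀k⟩ := ((hratio.eventually_gt_atTop C).and
    ((tendsto_exp_atTop.comp ht).eventually_ge_atTop x₀)).exists
  exact ⟨_, _, hx₀k, (hlt k).le, hCk⟩
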